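/- arXiv:2605.21793 — 6 statements merged into one kernel-verified Lean document; each statement's English description precedes it below -/
import Mathlib

section
/- Let (Ω, ℱ, P) be a probability space with measurable events A, Y, D, S, Δ, G. Assume positivity: each of the sixteen events of the form A^± ∩ Y^± ∩ D ∩ G and A^± ∩ Y^± ∩ D ∩ S ∩ Δ ∩ G (where A^± denotes A or its complement Aᶜ, and Y^± denotes Y or Yᶜ) has strictly positive probability. Assume missingness-at-random for testing: P(A | D ∩ S ∩ Y ∩ G) = P(A | D ∩ Y ∩ G) and P(A | D ∩ S ∩ Yᶜ ∩ G) = P(A | D ∩ Yᶜ ∩ G). Assume missingness-at-random for exposure observation: P(A | D ∩ S ∩ Δ ∩ Y ∩ G) = P(A | D ∩ S ∩ Y ∩ G) and P(A | D ∩ S ∩ Δ ∩ Yᶜ ∩ G) = P(A | D ∩ S ∩ Yᶜ ∩ G). Assume noncase exchangeability: P(Yᶜ ∩ D | A ∩ G) = P(Yᶜ ∩ D | Aᶜ ∩ G). Then, setting μ₁ = P(A | D ∩ S ∩ Δ ∩ Y ∩ G) and μ₀ = P(A | D ∩ S ∩ Δ ∩ Yᶜ ∩ G), the observed conditional odds ratio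 equals the full data conditional risk ratio: (μ₁/(1−μ₁)) / (μ₀/(1−μ₀)) = P(Y ∩ D | A ∩ G) / P(Y ∩ D | Aᶜ ∩ G). -/
open MeasureTheory

/-- Conditional probability `P(E | F) = P(E ∩ F) / P(F)` as a real number. -/
noncomputable def condProb {Ω : Type*} [MeasurableSpace Ω]
    (P : MeasureTheory.Measure Ω) (E F : Set Ω) : ℝ :=
  (P (E ∩ F)).toReal / (P F).toReal

/-- Theorem 1 (identification of the full data conditional risk ratio):
under positivity, missingness-at-random for testing and for exposure
observation, and noncase exchangeability, the observed conditional odds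
ratio equals the full data conditional risk ratio. -/
theorem tnd_identification_full_data_risk_ratio
    {Ω : Type*} [MeasurableSpace Ω] (P : Measure Ω) [IsProbabilityMeasure P]
    (A Y D S Δ G : Set Ω)
    (hA : MeasurableSet A) (hY : MeasurableSet Y) (hD : MeasurableSet D)
    (hS : MeasurableSet S) (hΔ : MeasurableSet Δ) (hG : MeasurableSet G)
    -- positivity: all sixteen events have positive probability
    (hpos : ∀ a ∈ ({A, Aᶜ} : Set (Set Ω)), ∀ y ∈ ({Y, Yᶜ} : Set (Set Ω)),
      0 < P (a ∩ y ∩ D ∩ G) ∧ 0 < P (a ∩ y ∩ D ∩ S ∩ Δ ∩ G))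
    -- missingness at random for testing
    (hmarS₁ : condProb P A (D ∩ S ∩ Y ∩ G) = condProb P A (D ∩ Y ∩ G))
    (hmarS₀ : condProb P A (D ∩ S ∩ Yᶜ ∩ G) = condProb P A (D ∩ Yᶜ ∩ G))
    -- missingness at random for exposure observation
    (hmarΔ₁ : condProb P A (D ∩ S ∩ Δ ∩ Y ∩ G) = condProb P A (D ∩ S ∩ Y ∩ G))
    (hmarΔ₀ : condProb P A (D ∩ S ∩ Δ ∩ Yᶜ ∩ G) = condProb P A (D ∩ S ∩ Yᶜ ∩ G))
    -- noncase exchangeability (core TND assumption)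
    (hexch : condProb P (Yᶜ ∩ D) (A ∩ G) = condProb P (Yᶜ ∩ D) (Aᶜ ∩ G)) :
    (condProb P A (D ∩ S ∩ Δ ∩ Y ∩ G) / (1 - condProb P A (D ∩ S ∩ Δ ∩ Y ∩ G))) /
      (condProb P A (D ∩ S ∩ Δ ∩ Yᶜ ∩ G) / (1 - condProb P A (D ∩ S ∩ Δ ∩ Yᶜ ∩ G)))
    = condProb P (Y ∩ D) (A ∩ G) / condProb P (Y ∩ D) (Aᶜ ∩ G) := by
  have hne : ∀ E : Set Ω, P E ≠ ⊤ := fun E => measure_ne_top P E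
  -- the four cell probabilities and the two exposure strata
  set a := (P (A ∩ Y ∩ D ∩ G)).toReal with ha_def
  set b := (P (Aᶜ ∩ Y ∩ D ∩ G)).toReal with hb_def
  set c := (P (A ∩ Yᶜ ∩ D ∩ G)).toReal with hc_def
  set d := (P (Aᶜ ∩ Yᶜ ∩ D ∩ G)).toReal with hd_def
  set u := (P (A ∩ G)).toReal with hu_def
  set v := (P (Aᶜ ∩ G)).toReal with hv_def
  have memA : A ∈ ({A, Aᶜ} : Set (Set Ω)) := by simp
  have memA' : Aᶜ ∈ ({A, Aᶜ} : Set (Set Ω)) := by simp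
  have memY : Y ∈ ({Y, Yᶜ} : Set (Set Ω)) := by simp
  have memY' : Yᶜ ∈ ({Y, Yᶜ} : Set (Set Ω)) := by simp
  have pa : 0 < a := ENNReal.toReal_pos (hpos A memA Y memY).1.ne' (hne _)
  have pb : 0 < b := ENNReal.toReal_pos (hpos Aᶜ memA' Y memY).1.ne' (hne _)
  have pc : 0 < c := ENNReal.toReal_pos (hpos A memA Yᶜ memY').1.ne' (hne _)
  have pd : 0 < d := ENNReal.toReal_pos (hpos Aᶜ memA' Yᶜ memY').1.ne' (hne _)
  have pu : 0 < u := by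
    refine ENNReal.toReal_pos (ne_of_gt ?_) (hne _)
    exact lt_of_lt_of_le (hpos A memA Y memY).1
      (measure_mono (by intro x hx; exact ⟨hx.1.1.1, hx.2⟩))
  have pv : 0 < v := by
    refine ENNReal.toReal_pos (ne_of_gt ?_) (hne _)
    exact lt_of_lt_of_le (hpos Aᶜ memA' Y memY).1
      (measure_mono (by intro x hx; exact ⟨hx.1.1.1, hx.2⟩))
  -- decomposition of the strata D ∩ Y ∩ G and D ∩ Yᶜ ∩ G
  have split : ∀ y : Set Ω, (P (D ∩ y ∩ G)).toReal
      = (P (A ∩ y ∩ D ∩ G)).toReal + (P (Aᶜ ∩ y ∩ D ∩ G)).toReal := by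
    intro y
    have h := measure_inter_add_diff (μ := P) (D ∩ y ∩ G) hA
    have e1 : D ∩ y ∩ G ∩ A = A ∩ y ∩ D ∩ G := by ext x; simp only [Set.mem_inter_iff]; tauto
    have e2 : (D ∩ y ∩ G) \ A = Aᶜ ∩ y ∩ D ∩ G := by
      ext x; simp only [Set.mem_inter_iff, Set.mem_diff, Set.mem_compl_iff]; tauto
    rw [e1, e2] at h
    rw [← h, ENNReal.toReal_add (hne _) (hne _)]
  have inter1 : ∀ y : Set Ω, A ∩ (D ∩ y ∩ G) = A ∩ y ∩ D ∩ G := by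
    intro y; ext x; simp only [Set.mem_inter_iff]; tauto
  -- μ₁ and μ₀ via the MAR chain
  have hμ₁ : condProb P A (D ∩ S ∩ Δ ∩ Y ∩ G) = a / (a + b) := by
    rw [hmarΔ₁, hmarS₁]
    unfold condProb
    rw [inter1 Y, split Y]
  have hμ₀ : condProb P A (D ∩ S ∩ Δ ∩ Yᶜ ∩ G) = c / (c + d) := by
    rw [hmarΔ₀, hmarS₀]
    unfold condProb
    rw [inter1 Yᶜ, split Yᶜ]
  -- the right-hand side conditional probabilities
  have eYA : Y ∩ D ∩ (A ∩ G) = A ∩ Y ∩ D ∩ G := by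
    ext x; simp only [Set.mem_inter_iff]; tauto
  have eYA' : Y ∩ D ∩ (Aᶜ ∩ G) = Aᶜ ∩ Y ∩ D ∩ G := by
    ext x; simp only [Set.mem_inter_iff]; tauto
  have eNA : Yᶜ ∩ D ∩ (A ∩ G) = A ∩ Yᶜ ∩ D ∩ G := by
    ext x; simp only [Set.mem_inter_iff, Set.mem_compl_iff]; tauto
  have eNA' : Yᶜ ∩ D ∩ (Aᶜ ∩ G) = Aᶜ ∩ Yᶜ ∩ D ∩ G := by
    ext x; simp only [Set.mem_inter_iff, Set.mem_compl_iff]; tauto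
  have hr₁ : condProb P (Y ∩ D) (A ∩ G) = a / u := by
    unfold condProb; rw [eYA]
  have hr₀ : condProb P (Y ∩ D) (Aᶜ ∩ G) = b / v := by
    unfold condProb; rw [eYA']
  have hex : c / u = d / v := by
    have h := hexch
    unfold condProb at h
    rw [eNA, eNA'] at h
    exact h
  have hex' : c * v = d * u := by
    field_simp at hex
    linarith [hex]
  rw [hμ₁, hμ₀, hr₁, hr₀]
  have hab : a + b > 0 := by linarith
  have hcd : c + d > 0 := by linarith
  have h1 : 1 - a / (a + b) = b / (a + b) := by field_simp; ring
  have h0 : 1 - c / (c + d) = d / (c + d) := by field_simp; ring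
  rw [h1, h0]
  field_simp
  linear_combination (-1 : ℝ) * hex'
end

section
/- Let (Ω, ℱ, P) be a probability space with measurable events A, Y, D, S, Δ, G, C₁, C₀. Assume positivity: each of the sixteen events of the form A^± ∩ Y^± ∩ D ∩ G and A^± ∩ Y^± ∩ D ∩ S ∩ Δ ∩ G has strictly positive probability. Assume missingness-at-random for testing: P(A | D ∩ S ∩ Y ∩ G) = P(A | D ∩ Y ∩ G) and P(A | D ∩ S ∩ Yᶜ ∩ G) = P(A | D ∩ Yᶜ ∩ G). Assume missingness-at-random for exposure observation: P(A | D ∩ S ∩ Δ ∩ Y ∩ G) = P(A | D ∩ S ∩ Y ∩ G) and P(A | D ∩ S ∩ Δ ∩ Yᶜ ∩ G) = P(A | D ∩ S ∩ Yᶜ ∩ G). Assume noncase exchangeability: P(Yᶜ ∩ D | A ∩ G) = P(Yᶜ ∩ D | Aᶜ ∩ G). Assume consistency: C₁ ∩ A = Y ∩ D ∩ A and C₀ ∩ Aᶜ = Y ∩ D ∩ Aᶜ, up to P-null sets. Assume no unmeasured confounding: P(C₁ | A ∩ G) = P(C₁ | G) and P(C₀ | Aᶜ ∩ G) = P(C₀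 | G). Then, setting μ₁ = P(A | D ∩ S ∩ Δ ∩ Y ∩ G) and μ₀ = P(A | D ∩ S ∩ Δ ∩ Yᶜ ∩ G), the observed conditional odds ratio equals the causal conditional risk ratio: (μ₁/(1−μ₁)) / (μ₀/(1−μ₀)) = P(C₁ | G) / P(C₀ | G). -/
open MeasureTheory

lemma split_meas {Ω : Type*} [MeasurableSpace Ω] (P : Measure Ω) [IsProbabilityMeasure P]
    (A F : Set Ω) (hA : MeasurableSet A) :
    (P F).toReal = (P (A ∩ F)).toReal + (P (Aᶜ ∩ F)).toReal := by
  have h : P (A ∩ F) + P (Aᶜ ∩ F) = P F := by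
    have h0 := measure_inter_add_diff (μ := P) F hA
    rw [Set.inter_comm A F, Set.inter_comm Aᶜ F, ← Set.diff_eq]
    exact h0
  rw [← h, ENNReal.toReal_add (measure_ne_top P _) (measure_ne_top P _)]

lemma odds_eq {Ω : Type*} [MeasurableSpace Ω] (P : Measure Ω) [IsProbabilityMeasure P]
    (A F : Set Ω) (hA : MeasurableSet A)
    (h1 : 0 < P (A ∩ F)) (h2 : 0 < P (Aᶜ ∩ F)) :
    condProb P A F / (1 - condProb P A F)
      = (P (A ∩ F)).toReal / (P (Aᶜ ∩ F)).toReal := by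
  have hx : 0 < (P (A ∩ F)).toReal := ENNReal.toReal_pos h1.ne' (measure_ne_top P _)
  have hy : 0 < (P (Aᶜ ∩ F)).toReal := ENNReal.toReal_pos h2.ne' (measure_ne_top P _)
  have hsplit := split_meas P A F hA
  unfold condProb
  rw [hsplit]
  field_simp
  rw [add_sub_cancel_left]
  exact div_self hy.ne'

/-- Theorem 2 (identification of the full data causal conditional risk ratio):
under positivity, missingness-at-random for testing and for exposure
observation, noncase exchangeability, consistency, and no unmeasured
confounding, the observed conditional odds ratio equals the causal
conditional risk ratio. -/
theorem tnd_identification_causal_risk_ratio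
    {Ω : Type*} [MeasurableSpace Ω] (P : Measure Ω) [IsProbabilityMeasure P]
    (A Y D S Δ G C₁ C₀ : Set Ω)
    (hA : MeasurableSet A) (hY : MeasurableSet Y) (hD : MeasurableSet D)
    (hS : MeasurableSet S) (hΔ : MeasurableSet Δ) (hG : MeasurableSet G)
    (hC₁ : MeasurableSet C₁) (hC₀ : MeasurableSet C₀)
    -- positivity: all sixteen events have positive probability
    (hpos : ∀ a ∈ ({A, Aᶜ} : Set (Set Ω)), ∀ y ∈ ({Y, Yᶜ} : Set (Set Ω)),
      0 < P (a ∩ y ∩ D ∩ G) ∧ 0 < P (a ∩ y ∩ D ∩ S ∩ Δ ∩ G))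
    -- missingness at random for testing
    (hmarS₁ : condProb P A (D ∩ S ∩ Y ∩ G) = condProb P A (D ∩ Y ∩ G))
    (hmarS₀ : condProb P A (D ∩ S ∩ Yᶜ ∩ G) = condProb P A (D ∩ Yᶜ ∩ G))
    -- missingness at random for exposure observation
    (hmarΔ₁ : condProb P A (D ∩ S ∩ Δ ∩ Y ∩ G) = condProb P A (D ∩ S ∩ Y ∩ G))
    (hmarΔ₀ : condProb P A (D ∩ S ∩ Δ ∩ Yᶜ ∩ G) = condProb P A (D ∩ S ∩ Yᶜ ∩ G))
    -- noncase exchangeability (core TND assumption)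
    (hexch : condProb P (Yᶜ ∩ D) (A ∩ G) = condProb P (Yᶜ ∩ D) (Aᶜ ∩ G))
    -- consistency (up to P-null sets)
    (hcons₁ : (C₁ ∩ A : Set Ω) =ᵐ[P] (Y ∩ D ∩ A : Set Ω))
    (hcons₀ : (C₀ ∩ Aᶜ : Set Ω) =ᵐ[P] (Y ∩ D ∩ Aᶜ : Set Ω))
    -- no unmeasured confounding
    (hnuc₁ : condProb P C₁ (A ∩ G) = condProb P C₁ G)
    (hnuc₀ : condProb P C₀ (Aᶜ ∩ G) = condProb P C₀ G) :
    (condProb P A (D ∩ S ∩ Δ ∩ Y ∩ G) / (1 - condProb P A (D ∩ S ∩ Δ ∩ Y ∩ G))) /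
      (condProb P A (D ∩ S ∩ Δ ∩ Yᶜ ∩ G) / (1 - condProb P A (D ∩ S ∩ Δ ∩ Yᶜ ∩ G)))
    = condProb P C₁ G / condProb P C₀ G := by
  classical
  -- extract positivity
  have hmemA : A ∈ ({A, Aᶜ} : Set (Set Ω)) := Set.mem_insert _ _
  have hmemA' : Aᶜ ∈ ({A, Aᶜ} : Set (Set Ω)) := Set.mem_insert_of_mem _ rfl
  have hmemY : Y ∈ ({Y, Yᶜ} : Set (Set Ω)) := Set.mem_insert _ _
  have hmemY' : Yᶜ ∈ ({Y, Yᶜ} : Set (Set Ω)) := Set.mem_insert_of_mem _ rfl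
  obtain ⟨pAY, -⟩ := hpos A hmemA Y hmemY
  obtain ⟨pAY', -⟩ := hpos A hmemA Yᶜ hmemY'
  obtain ⟨pA'Y, -⟩ := hpos Aᶜ hmemA' Y hmemY
  obtain ⟨pA'Y', -⟩ := hpos Aᶜ hmemA' Yᶜ hmemY'
  -- chain the MAR assumptions
  have hμ₁ : condProb P A (D ∩ S ∩ Δ ∩ Y ∩ G) = condProb P A (D ∩ Y ∩ G) :=
    hmarΔ₁.trans hmarS₁
  have hμ₀ : condProb P A (D ∩ S ∩ Δ ∩ Yᶜ ∩ G) = condProb P A (D ∩ Yᶜ ∩ G) :=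
    hmarΔ₀.trans hmarS₀
  -- set identities
  have e1 : A ∩ (D ∩ Y ∩ G) = A ∩ Y ∩ D ∩ G := by ext x; simp only [Set.mem_inter_iff]; tauto
  have e2 : Aᶜ ∩ (D ∩ Y ∩ G) = Aᶜ ∩ Y ∩ D ∩ G := by ext x; simp only [Set.mem_inter_iff]; tauto
  have e3 : A ∩ (D ∩ Yᶜ ∩ G) = A ∩ Yᶜ ∩ D ∩ G := by ext x; simp only [Set.mem_inter_iff]; tauto
  have e4 : Aᶜ ∩ (D ∩ Yᶜ ∩ G) = Aᶜ ∩ Yᶜ ∩ D ∩ G := by ext x; simp only [Set.mem_inter_iff]; tauto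
  -- real masses
  set mAY := (P (A ∩ Y ∩ D ∩ G)).toReal with hmAY
  set mAY' := (P (A ∩ Yᶜ ∩ D ∩ G)).toReal with hmAY'
  set mA'Y := (P (Aᶜ ∩ Y ∩ D ∩ G)).toReal with hmA'Y
  set mA'Y' := (P (Aᶜ ∩ Yᶜ ∩ D ∩ G)).toReal with hmA'Y'
  have hmAYpos : 0 < mAY := ENNReal.toReal_pos pAY.ne' (measure_ne_top P _)
  have hmAY'pos : 0 < mAY' := ENNReal.toReal_pos pAY'.ne' (measure_ne_top P _)
  have hmA'Ypos : 0 < mA'Y := ENNReal.toReal_pos pA'Y.ne' (measure_ne_top P _)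
  have hmA'Y'pos : 0 < mA'Y' := ENNReal.toReal_pos pA'Y'.ne' (measure_ne_top P _)
  -- positivity of strata P(A∩G), P(Aᶜ∩G)
  have pAG : 0 < P (A ∩ G) :=
    lt_of_lt_of_le pAY (measure_mono (by intro x hx; exact ⟨hx.1.1.1, hx.2⟩))
  have pA'G : 0 < P (Aᶜ ∩ G) :=
    lt_of_lt_of_le pA'Y (measure_mono (by intro x hx; exact ⟨hx.1.1.1, hx.2⟩))
  set nA := (P (A ∩ G)).toReal with hnA
  set nA' := (P (Aᶜ ∩ G)).toReal with hnA'
  have hnApos : 0 < nA := ENNReal.toReal_pos pAG.ne' (measure_ne_top P _)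
  have hnA'pos : 0 < nA' := ENNReal.toReal_pos pA'G.ne' (measure_ne_top P _)
  -- odds for the cases
  have hodds₁ : condProb P A (D ∩ S ∩ Δ ∩ Y ∩ G) /
      (1 - condProb P A (D ∩ S ∩ Δ ∩ Y ∩ G)) = mAY / mA'Y := by
    rw [hμ₁, odds_eq P A (D ∩ Y ∩ G) hA (by rw [e1]; exact pAY) (by rw [e2]; exact pA'Y),
      e1, e2]
  have hodds₀ : condProb P A (D ∩ S ∩ Δ ∩ Yᶜ ∩ G) /
      (1 - condProb P A (D ∩ S ∩ Δ ∩ Yᶜ ∩ G)) = mAY' / mA'Y' := by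
    rw [hμ₀, odds_eq P A (D ∩ Yᶜ ∩ G) hA (by rw [e3]; exact pAY') (by rw [e4]; exact pA'Y'),
      e3, e4]
  -- consistency: rewrite C₁, C₀ probabilities
  have hC1meas : P (C₁ ∩ (A ∩ G)) = P (A ∩ Y ∩ D ∩ G) := by
    have h : (C₁ ∩ (A ∩ G) : Set Ω) =ᵐ[P] ((Y ∩ D ∩ A) ∩ G : Set Ω) := by
      have := hcons₁.inter (Filter.EventuallyEq.refl _ (G : Set Ω))
      simpa [Set.inter_assoc] using this
    rw [measure_congr h]
    congr 1
    ext x; simp only [Set.mem_inter_iff]; tauto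
  have hC0meas : P (C₀ ∩ (Aᶜ ∩ G)) = P (Aᶜ ∩ Y ∩ D ∩ G) := by
    have h : (C₀ ∩ (Aᶜ ∩ G) : Set Ω) =ᵐ[P] ((Y ∩ D ∩ Aᶜ) ∩ G : Set Ω) := by
      have := hcons₀.inter (Filter.EventuallyEq.refl _ (G : Set Ω))
      simpa [Set.inter_assoc] using this
    rw [measure_congr h]
    congr 1
    ext x; simp only [Set.mem_inter_iff]; tauto
  -- RHS pieces
  have hRHS₁ : condProb P C₁ G = mAY / nA := by
    rw [← hnuc₁]; unfold condProb; rw [hC1meas]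
  have hRHS₀ : condProb P C₀ G = mA'Y / nA' := by
    rw [← hnuc₀]; unfold condProb; rw [hC0meas]
  -- exchangeability in real masses
  have hex : mAY' / nA = mA'Y' / nA' := by
    have eq1 : (Yᶜ ∩ D) ∩ (A ∩ G) = A ∩ Yᶜ ∩ D ∩ G := by
      ext x; simp only [Set.mem_inter_iff]; tauto
    have eq2 : (Yᶜ ∩ D) ∩ (Aᶜ ∩ G) = Aᶜ ∩ Yᶜ ∩ D ∩ G := by
      ext x; simp only [Set.mem_inter_iff]; tauto
    have := hexch
    unfold condProb at this
    rw [eq1, eq2] at this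
    exact this
  rw [hodds₁, hodds₀, hRHS₁, hRHS₀]
  rw [div_eq_div_iff hnApos.ne' hnA'pos.ne'] at hex
  field_simp
  linear_combination (-1 : ℝ) * hex
end

section
/- Let (Ω, ℱ, P) be a probability space with measurable events A, Y, D, G such that each of the eight events A^± ∩ Y^± ∩ D ∩ G has strictly positive probability. Let β, f ∈ ℝ^b and h ∈ ℝ, and suppose the partially linear logistic model holds at the stratum G: logit P(A | D ∩ Y ∩ G) = ⟪β, f⟫ + h and logit P(A | D ∩ Yᶜ ∩ G) = h, where logit p = log(p/(1−p)). Then exp(⟪β, f⟫) equals the full data conditional odds ratio: exp(⟪β, f⟫) = [P(Y ∩ D | A ∩ G)/P(Yᶜ ∩ D | A ∩ G)] / [P(Y ∩ D | Aᶜ ∩ G)/P(Yᶜ ∩ D | Aᶜ ∩ G)]. -/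
open MeasureTheory
open scoped RealInnerProductSpace

/-- The logit function `logit p = log (p / (1 - p))`. -/
noncomputable def logit (p : ℝ) : ℝ := Real.log (p / (1 - p))

/-- Appendix A.3: if the partially linear logistic regression model holds at
the covariate stratum `G`, i.e. `logit P(A | D ∩ Y ∩ G) = ⟪β, f⟫ + h` and
`logit P(A | D ∩ Yᶜ ∩ G) = h`, then `exp ⟪β, f⟫` equals the full data
conditional odds ratio. -/
theorem exp_inner_eq_full_data_odds_ratio
    {Ω : Type*} [MeasurableSpace Ω] (P : Measure Ω) [IsProbabilityMeasure P]
    (A Y D G : Set Ω)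
    (hA : MeasurableSet A) (hY : MeasurableSet Y) (hD : MeasurableSet D)
    (hG : MeasurableSet G)
    -- positivity: all eight events have positive probability
    (hpos : ∀ a ∈ ({A, Aᶜ} : Set (Set Ω)), ∀ y ∈ ({Y, Yᶜ} : Set (Set Ω)),
      0 < P (a ∩ y ∩ D ∩ G))
    {b : ℕ} (β f : EuclideanSpace ℝ (Fin b)) (h : ℝ)
    -- the partially linear logistic regression model at the stratum G
    (hmodel₁ : logit (condProb P A (D ∩ Y ∩ G)) = ⟪β, f⟫ + h)
    (hmodel₀ : logit (condProb P A (D ∩ Yᶜ ∩ G)) = h) :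
    Real.exp ⟪β, f⟫ =
      (condProb P (Y ∩ D) (A ∩ G) / condProb P (Yᶜ ∩ D) (A ∩ G)) /
        (condProb P (Y ∩ D) (Aᶜ ∩ G) / condProb P (Yᶜ ∩ D) (Aᶜ ∩ G)) := by
  classical
  set a := (P (A ∩ Y ∩ D ∩ G)).toReal with ha_def
  set b' := (P (A ∩ Yᶜ ∩ D ∩ G)).toReal with hb_def
  set c := (P (Aᶜ ∩ Y ∩ D ∩ G)).toReal with hc_def
  set d := (P (Aᶜ ∩ Yᶜ ∩ D ∩ G)).toReal with hd_def
  have hfin : ∀ s : Set Ω, P s ≠ ⊤ := fun s => measure_ne_top P s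
  have ha : 0 < a := ENNReal.toReal_pos (hpos A (by simp) Y (by simp)).ne' (hfin _)
  have hb : 0 < b' := ENNReal.toReal_pos (hpos A (by simp) Yᶜ (by simp)).ne' (hfin _)
  have hc : 0 < c := ENNReal.toReal_pos (hpos Aᶜ (by simp) Y (by simp)).ne' (hfin _)
  have hd : 0 < d := ENNReal.toReal_pos (hpos Aᶜ (by simp) Yᶜ (by simp)).ne' (hfin _)
  -- split P(D ∩ Y ∩ G) and P(D ∩ Yᶜ ∩ G) by A
  have hsplit : ∀ Z : Set Ω, (P (D ∩ Z ∩ G)).toReal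
      = (P (A ∩ Z ∩ D ∩ G)).toReal + (P (Aᶜ ∩ Z ∩ D ∩ G)).toReal := by
    intro Z
    have h1 : (D ∩ Z ∩ G) ∩ A = A ∩ Z ∩ D ∩ G := by ext ω; simp; tauto
    have h2 : (D ∩ Z ∩ G) \ A = Aᶜ ∩ Z ∩ D ∩ G := by
      ext ω; simp [Set.mem_diff]; tauto
    have := measure_inter_add_diff (μ := P) (D ∩ Z ∩ G) hA
    rw [h1, h2] at this
    rw [← this, ENNReal.toReal_add (hfin _) (hfin _)]
  have hsplit1 := hsplit Y
  have hsplit0 := hsplit Yᶜ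
  -- compute condProb for the model
  have hcp1 : condProb P A (D ∩ Y ∩ G) = a / (a + c) := by
    have hs : A ∩ (D ∩ Y ∩ G) = A ∩ Y ∩ D ∩ G := by ext ω; simp; tauto
    rw [condProb, hs, hsplit1]
  have hcp0 : condProb P A (D ∩ Yᶜ ∩ G) = b' / (b' + d) := by
    have hs : A ∩ (D ∩ Yᶜ ∩ G) = A ∩ Yᶜ ∩ D ∩ G := by ext ω; simp; tauto
    rw [condProb, hs, hsplit0]
  have hac : a + c ≠ 0 := by positivity
  have hbd : b' + d ≠ 0 := by positivity
  have hlog1 : Real.log (a / c) = ⟪β, f⟫ + h := by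
    rw [← hmodel₁, hcp1, logit]
    congr 1
    field_simp
    simp [hc.ne']
  have hlog0 : Real.log (b' / d) = h := by
    rw [← hmodel₀, hcp0, logit]
    congr 1
    field_simp
    simp [hd.ne']
  have hinner : ⟪β, f⟫ = Real.log (a / c) - Real.log (b' / d) := by
    rw [hlog1, hlog0]; ring
  have hexp : Real.exp ⟪β, f⟫ = (a / c) / (b' / d) := by
    rw [hinner, Real.exp_sub, Real.exp_log (by positivity), Real.exp_log (by positivity)]
  -- compute the RHS conditional probabilities
  have hs1 : (Y ∩ D) ∩ (A ∩ G) = A ∩ Y ∩ D ∩ G := by ext ω; simp; tauto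
  have hs2 : (Yᶜ ∩ D) ∩ (A ∩ G) = A ∩ Yᶜ ∩ D ∩ G := by ext ω; simp; tauto
  have hs3 : (Y ∩ D) ∩ (Aᶜ ∩ G) = Aᶜ ∩ Y ∩ D ∩ G := by ext ω; simp; tauto
  have hs4 : (Yᶜ ∩ D) ∩ (Aᶜ ∩ G) = Aᶜ ∩ Yᶜ ∩ D ∩ G := by ext ω; simp; tauto
  have hsA : (0:ℝ) < (P (A ∩ G)).toReal := by
    refine ENNReal.toReal_pos ?_ (hfin _)
    refine (lt_of_lt_of_le (hpos A (by simp) Y (by simp)) (measure_mono ?_)).ne'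
    intro ω hω; exact ⟨hω.1.1.1, hω.2⟩
  have hsAc : (0:ℝ) < (P (Aᶜ ∩ G)).toReal := by
    refine ENNReal.toReal_pos ?_ (hfin _)
    refine (lt_of_lt_of_le (hpos Aᶜ (by simp) Y (by simp)) (measure_mono ?_)).ne'
    intro ω hω; exact ⟨hω.1.1.1, hω.2⟩
  rw [hexp, condProb, condProb, condProb, condProb, hs1, hs2, hs3, hs4,
    ← ha_def, ← hb_def, ← hc_def, ← hd_def]
  have h1 := hsA.ne'
  have h2 := hsAc.ne'
  have h3 := hb.ne'
  have h4 := hc.ne'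
  have h5 := hd.ne'
  field_simp
end

section
/- Let (Ω, ℱ, P) be a probability space with measurable events A, Y, D, G such that each of the four events A^± ∩ Y^± ∩ D ∩ G intersected appropriately has positive probability (P(A ∩ G) > 0, P(Aᶜ ∩ G) > 0, P(Yᶜ ∩ D ∩ A ∩ G) > 0, P(Yᶜ ∩ D ∩ Aᶜ ∩ G) > 0, P(Y ∩ D ∩ Aᶜ ∩ G) > 0). Assume noncase exchangeability: P(Yᶜ ∩ D | A ∩ G) = P(Yᶜ ∩ D | Aᶜ ∩ G). Then the full data conditional odds ratio equals the full data conditional risk ratio: [P(Y ∩ D | A ∩ G)/P(Yᶜ ∩ D | A ∩ G)] / [P(Y ∩ D | Aᶜ ∩ G)/P(Yᶜ ∩ D | Aᶜ ∩ G)] = P(Y ∩ D | A ∩ G) / P(Y ∩ D | Aᶜ ∩ G). -/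
open MeasureTheory

/-- Final step of the proof of Theorem 1: under noncase exchangeability (the
core test-negative design assumption), the full data conditional odds ratio
equals the full data conditional risk ratio. -/
theorem full_data_odds_ratio_eq_risk_ratio
    {Ω : Type*} [MeasurableSpace Ω] (P : Measure Ω) [IsProbabilityMeasure P]
    (A Y D G : Set Ω)
    (hA : MeasurableSet A) (hY : MeasurableSet Y) (hD : MeasurableSet D)
    (hG : MeasurableSet G)
    (hposA : 0 < P (A ∩ G)) (hposAc : 0 < P (Aᶜ ∩ G))
    (hpos₁ : 0 < P (Yᶜ ∩ D ∩ A ∩ G)) (hpos₂ : 0 < P (Yᶜ ∩ D ∩ Aᶜ ∩ G))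
    (hpos₃ : 0 < P (Y ∩ D ∩ Aᶜ ∩ G))
    -- noncase exchangeability (core TND assumption)
    (hexch : condProb P (Yᶜ ∩ D) (A ∩ G) = condProb P (Yᶜ ∩ D) (Aᶜ ∩ G)) :
    (condProb P (Y ∩ D) (A ∩ G) / condProb P (Yᶜ ∩ D) (A ∩ G)) /
      (condProb P (Y ∩ D) (Aᶜ ∩ G) / condProb P (Yᶜ ∩ D) (Aᶜ ∩ G))
    = condProb P (Y ∩ D) (A ∩ G) / condProb P (Y ∩ D) (Aᶜ ∩ G) := by
  have hne : P (Yᶜ ∩ D ∩ (Aᶜ ∩ G)) = P (Yᶜ ∩ D ∩ Aᶜ ∩ G) := by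
    rw [← Set.inter_assoc]
  have hc : 0 < condProb P (Yᶜ ∩ D) (Aᶜ ∩ G) := by
    unfold condProb
    apply div_pos
    · rw [hne]
      exact ENNReal.toReal_pos hpos₂.ne' (measure_ne_top P _)
    · exact ENNReal.toReal_pos hposAc.ne' (measure_ne_top P _)
  rw [hexch, div_div_div_eq]
  rw [mul_comm (condProb P (Yᶜ ∩ D) (Aᶜ ∩ G)), mul_div_mul_right _ _ hc.ne']
end

section
/- Let (Ω, ℱ, P) be a probability space with measurable events A, Y, D, G, C₁, C₀ with P(A ∩ G) > 0, P(Aᶜ ∩ G) > 0, P(G) > 0, and P(Y ∩ D ∩ Aᶜ ∩ G) > 0. Assume consistency: C₁ ∩ A = Y ∩ D ∩ A and C₀ ∩ Aᶜ = Y ∩ D ∩ Aᶜ up to P-null sets. Assume no unmeasured confounding: P(C₁ | A ∩ G) = P(C₁ | G) and P(C₀ | Aᶜ ∩ G) = P(C₀ | G). Then the full data conditional risk ratio equals the causal conditional risk ratio: P(Y ∩ D | A ∩ G) / P(Y ∩ D | Aᶜ ∩ G) = P(C₁ | G) / P(C₀ | G). -/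
open MeasureTheory

/-- Proof of Theorem 2 (Appendix A.2): under consistency and no unmeasured
confounding, the full data conditional risk ratio equals the causal
conditional risk ratio. -/
theorem full_data_risk_ratio_eq_causal_risk_ratio
    {Ω : Type*} [MeasurableSpace Ω] (P : Measure Ω) [IsProbabilityMeasure P]
    (A Y D G C₁ C₀ : Set Ω)
    (hA : MeasurableSet A) (hY : MeasurableSet Y) (hD : MeasurableSet D)
    (hG : MeasurableSet G) (hC₁ : MeasurableSet C₁) (hC₀ : MeasurableSet C₀)
    (hposA : 0 < P (A ∩ G)) (hposAc : 0 < P (Aᶜ ∩ G)) (hposG : 0 < P G)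
    (hpos : 0 < P (Y ∩ D ∩ Aᶜ ∩ G))
    -- consistency (up to P-null sets)
    (hcons₁ : (C₁ ∩ A : Set Ω) =ᵐ[P] (Y ∩ D ∩ A : Set Ω))
    (hcons₀ : (C₀ ∩ Aᶜ : Set Ω) =ᵐ[P] (Y ∩ D ∩ Aᶜ : Set Ω))
    -- no unmeasured confounding
    (hnuc₁ : condProb P C₁ (A ∩ G) = condProb P C₁ G)
    (hnuc₀ : condProb P C₀ (Aᶜ ∩ G) = condProb P C₀ G) :
    condProb P (Y ∩ D) (A ∩ G) / condProb P (Y ∩ D) (Aᶜ ∩ G)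
      = condProb P C₁ G / condProb P C₀ G := by
  have h1 : P (Y ∩ D ∩ (A ∩ G)) = P (C₁ ∩ (A ∩ G)) := by
    have := measure_congr (ae_eq_set_inter hcons₁ (ae_eq_refl G))
    rw [Set.inter_assoc, Set.inter_assoc] at this
    exact this.symm
  have h0 : P (Y ∩ D ∩ (Aᶜ ∩ G)) = P (C₀ ∩ (Aᶜ ∩ G)) := by
    have := measure_congr (ae_eq_set_inter hcons₀ (ae_eq_refl G))
    rw [Set.inter_assoc, Set.inter_assoc] at this
    exact this.symm
  have e1 : condProb P (Y ∩ D) (A ∩ G) = condProb P C₁ G := by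
    rw [← hnuc₁]; unfold condProb; rw [h1]
  have e0 : condProb P (Y ∩ D) (Aᶜ ∩ G) = condProb P C₀ G := by
    rw [← hnuc₀]; unfold condProb; rw [h0]
  rw [e1, e0]
end

section
/- Let b be a positive integer and let β, ε, f ∈ ℝ^b, h, c ∈ ℝ, and y ∈ {0, 1} (a real number equal to 0 or 1). Define μ(y) = expit(y·⟪β, f⟫ + h), where expit(t) = exp(t)/(1 + exp(t)), and define H(y) = y − c. Then expit( logit(μ(y)) + ⟪ε, f⟫ · H(y) ) = expit( y·⟪β + ε, f⟫ + (h + ⟪ε, f⟫·H(0)) ), where logit p = log(p/(1−p)). In particular, the logistic fluctuation of μ along direction ⟪ε, f⟫·H(y) remains of the partially linear logistic form with coefficient vector β + ε and offset h + ⟪ε, f⟫·H(0). -/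
open scoped RealInnerProductSpace

/-- The logistic (expit) function `expit t = exp t / (1 + exp t)`. -/
noncomputable def expit (t : ℝ) : ℝ := Real.exp t / (1 + Real.exp t)

lemma logit_expit (t : ℝ) : logit (expit t) = t := by
  have h1 : (0:ℝ) < 1 + Real.exp t := by positivity
  have h2 : 1 - expit t = 1 / (1 + Real.exp t) := by
    rw [expit, eq_div_iff h1.ne', sub_mul, div_mul_cancel₀ _ h1.ne']; ring
  have : expit t / (1 - expit t) = Real.exp t := by
    rw [h2, expit]
    field_simp
  rw [logit, this, Real.log_exp]

/-- Section 3.3: the logistic fluctuation of `μ(y) = expit(y⟪β,f⟫ + h)` along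
the direction `⟪ε,f⟫·H(y)` with `H(y) = y − c` remains of the partially linear
logistic form, with coefficient vector `β + ε` and offset `h + ⟪ε,f⟫·H(0)`. -/
theorem logistic_fluctuation_preserves_partially_linear_form
    {b : ℕ} (hb : 0 < b) (β ε f : EuclideanSpace ℝ (Fin b)) (h c y : ℝ)
    (hy : y = 0 ∨ y = 1) :
    expit (logit (expit (y * ⟪β, f⟫ + h)) + ⟪ε, f⟫ * (y - c))
      = expit (y * ⟪β + ε, f⟫ + (h + ⟪ε, f⟫ * (0 - c))) := by
  rw [logit_expit, inner_add_left]
  rcases hy with rfl | rfl <;> ring_nf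
end
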